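/- arXiv:math/0412553 — 7 statements merged into one kernel-verified Lean document; each statement's English description precedes it below -/
import Mathlib

section
/- Let X be a topological space in which every Λ-set is open, and suppose g ≤ f are real functions on X. Suppose ρ is a strong binary relation on the power set of X and for each rational t there are lower indefinite cut sets A(f,t), A(g,t) such that t₁ < t₂ implies A(f,t₁) ρ A(g,t₂). Then there exists a contra-continuous function h on X with g ≤ h ≤ f. -/
/-!
A space whose Λ-sets are open is Alexandrov-discrete, so it is locally connected and the
contra-continuous real functions on it are just the locally constant ones. It therefore suffices
that `g y ≤ f x` whenever `x` and `y` lie in the same connected component; then `h` can be taken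
to be the supremum of `g` over the component of `x`. For that estimate, pick rationals
`f x < t < u`. The union of all `C` with `C ρ Ag(u)` is clopen: interpolating `C ρ D ρ Ag(u)`
puts both the open set `C^Λ` and the closed set `D^V ⊇ C` inside that union. The union contains
`Af(t) ∋ x` and lies in `Ag(u) ⊆ {g ≤ u}`, hence so does the component of `x`.
-/

open Set

variable {X : Type*} [TopologicalSpace X]

/-- The kernel `A^Λ`: intersection of all open sets containing `A`. -/
def kernelSet (A : Set X) : Set X := ⋂₀ {O | IsOpen O ∧ A ⊆ O}

/-- The V-hull `A^V`: union of all closed sets contained in `A`. -/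
def vHull (A : Set X) : Set X := ⋃₀ {F | IsClosed F ∧ F ⊆ A}

/-- An F_σ set: a countable union of closed sets. -/
def IsFsigma (A : Set X) : Prop :=
  ∃ S : Set (Set X), S.Countable ∧ (∀ F ∈ S, IsClosed F) ∧ A = ⋃₀ S

lemma kernelSet_eq_nhdsKer (A : Set X) : kernelSet A = nhdsKer A :=
  (nhdsKer_def A).symm

lemma alexandrovDiscrete_of_isOpen_of_eq_kernelSet
    (hΛ : ∀ A : Set X, A = kernelSet A → IsOpen A) : AlexandrovDiscrete X where
  isOpen_sInter S hS := by
    have isOpen_nhdsKer (A : Set X) : IsOpen (nhdsKer A) :=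
      hΛ _ (by rw [kernelSet_eq_nhdsKer, nhdsKer_nhdsKer])
    have hker : nhdsKer (⋂₀ S) = ⋂₀ S :=
      (subset_sInter fun s hs => nhdsKer_minimal (sInter_subset_of_mem hs) (hS s hs)).antisymm
        subset_nhdsKer
    exact hker ▸ isOpen_nhdsKer _

lemma vHull_subset (A : Set X) : vHull A ⊆ A :=
  sUnion_subset fun _ hF => hF.2

lemma isClosed_vHull [AlexandrovDiscrete X] (A : Set X) : IsClosed (vHull A) :=
  isClosed_sUnion fun _ hF => hF.1

section StrongRelation

variable {ρ : Set X → Set X → Prop}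

lemma isClopen_sUnion_setOf_rel [AlexandrovDiscrete X]
    (interp : ∀ A B, ρ A B → ∃ C, ρ A C ∧ ρ C B)
    (hρ : ∀ A B, ρ A B → kernelSet A ⊆ B ∧ A ⊆ vHull B) (B : Set X) :
    IsClopen (⋃₀ {C | ρ C B}) := by
  have hstep : ∀ C, ρ C B → ∃ D, ρ D B ∧ nhdsKer C ⊆ D ∧ C ⊆ vHull D := by
    intro C hC
    obtain ⟨D, hCD, hDB⟩ := interp C B hC
    exact ⟨D, hDB, kernelSet_eq_nhdsKer C ▸ (hρ C D hCD).1, (hρ C D hCD).2⟩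
  constructor
  · have hunion : ⋃₀ {C | ρ C B} = ⋃ D ∈ {C | ρ C B}, vHull D := by
      refine (sUnion_subset fun C hC => ?_).antisymm
        (iUnion₂_subset fun D hD => (vHull_subset D).trans (subset_sUnion_of_mem hD))
      obtain ⟨D, hD, -, hCD⟩ := hstep C hC
      exact hCD.trans (subset_biUnion_of_mem (u := vHull) hD)
    exact hunion ▸ isClosed_iUnion₂ fun D _ => isClosed_vHull D
  · refine isOpen_iff_forall_mem_open.2 fun z ⟨C, hC, hz⟩ => ?_
    obtain ⟨D, hD, hCD, -⟩ := hstep C hC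
    exact ⟨nhdsKer C, hCD.trans (subset_sUnion_of_mem hD), isOpen_nhdsKer, subset_nhdsKer hz⟩

lemma connectedComponent_subset_of_rel [AlexandrovDiscrete X]
    (interp : ∀ A B, ρ A B → ∃ C, ρ A C ∧ ρ C B)
    (hρ : ∀ A B, ρ A B → kernelSet A ⊆ B ∧ A ⊆ vHull B) {A B : Set X} (hAB : ρ A B)
    {x : X} (hx : x ∈ A) : connectedComponent x ⊆ B :=
  ((isClopen_sUnion_setOf_rel interp hρ B).connectedComponent_subset
      (subset_sUnion_of_mem (t := A) hAB hx)).trans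
    (sUnion_subset fun C hC => (hρ C B hC).2.trans (vHull_subset B))

end StrongRelation

lemma exists_isLocallyConstant_between [LocallyConnectedSpace X] {f g : X → ℝ}
    (hgf : ∀ x, ∀ y ∈ connectedComponent x, g y ≤ f x) :
    ∃ h : X → ℝ, IsLocallyConstant h ∧ g ≤ h ∧ h ≤ f := by
  refine ⟨fun x => sSup (g '' connectedComponent x), ?_, fun x => ?_, fun x => ?_⟩
  · exact IsLocallyConstant.of_constant_on_connected_components fun x y hy => by
      rw [connectedComponent_eq hy]
  · exact le_csSup ⟨f x, forall_mem_image.2 (hgf x)⟩ (mem_image_of_mem g mem_connectedComponent)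
  · exact csSup_le (image_nonempty.2 ⟨x, mem_connectedComponent⟩) (forall_mem_image.2 (hgf x))

lemma IsLocallyConstant.isClosed_preimage {Y : Type*} {h : X → Y} (hh : IsLocallyConstant h)
    (U : Set Y) : IsClosed (h ⁻¹' U) :=
  isOpen_compl_iff.1 (hh Uᶜ)

theorem insertion_contraContinuous_general
    (hΛ : ∀ A : Set X, A = kernelSet A → IsOpen A)
    (f g : X → ℝ)
    (ρ : Set X → Set X → Prop)
    -- ρ is a strong binary relation:
    (hρ1 : ∀ (m n : ℕ) (A : Fin m → Set X) (B : Fin n → Set X),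
      (∀ i j, ρ (A i) (B j)) →
        ∃ C : Set X, (∀ i, ρ (A i) C) ∧ (∀ j, ρ C (B j)))
    (hρ3 : ∀ A B : Set X, ρ A B → kernelSet A ⊆ B ∧ A ⊆ vHull B)
    -- lower indefinite cut sets
    (Af Ag : ℚ → Set X)
    (hAf : ∀ t : ℚ, {x | f x < t} ⊆ Af t ∧ Af t ⊆ {x | f x ≤ t})
    (hAg : ∀ t : ℚ, {x | g x < t} ⊆ Ag t ∧ Ag t ⊆ {x | g x ≤ t})
    (hcut : ∀ t₁ t₂ : ℚ, t₁ < t₂ → ρ (Af t₁) (Ag t₂)) :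
    ∃ h : X → ℝ, (∀ U : Set ℝ, IsOpen U → IsClosed (h ⁻¹' U)) ∧ g ≤ h ∧ h ≤ f := by
  have := alexandrovDiscrete_of_isOpen_of_eq_kernelSet hΛ
  have interp (A B : Set X) (hAB : ρ A B) : ∃ C, ρ A C ∧ ρ C B := by
    obtain ⟨C, hAC, hCB⟩ := hρ1 1 1 (fun _ => A) (fun _ => B) (fun _ _ => hAB)
    exact ⟨C, hAC 0, hCB 0⟩
  have hgf : ∀ x, ∀ y ∈ connectedComponent x, g y ≤ f x := by
    intro x y hy
    by_contra! hlt
    obtain ⟨t, hxt, htgy⟩ := exists_rat_btwn hlt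
    obtain ⟨u, htu, hugy⟩ := exists_rat_btwn htgy
    have hyu : y ∈ Ag u := connectedComponent_subset_of_rel interp hρ3
      (hcut t u (by exact_mod_cast htu)) ((hAf t).1 hxt) hy
    exact hugy.not_ge ((hAg u).2 hyu)
  obtain ⟨h, hloc, hgh, hhf⟩ := exists_isLocallyConstant_between hgf
  exact ⟨h, fun U _ => hloc.isClosed_preimage U, hgh, hhf⟩

theorem insertion_contraContinuous
    (hΛ : ∀ A : Set X, A = kernelSet A → IsOpen A)
    (f g : X → ℝ) (hgf : g ≤ f)
    (ρ : Set X → Set X → Prop)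
    -- ρ is a strong binary relation:
    (hρ1 : ∀ (m n : ℕ) (A : Fin m → Set X) (B : Fin n → Set X),
      (∀ i j, ρ (A i) (B j)) →
        ∃ C : Set X, (∀ i, ρ (A i) C) ∧ (∀ j, ρ C (B j)))
    (hρ2 : ∀ A B : Set X, A ⊆ B →
      ((∀ v, ρ B v → ρ A v) ∧ (∀ u, ρ u A → ρ u B)))
    (hρ3 : ∀ A B : Set X, ρ A B → kernelSet A ⊆ B ∧ A ⊆ vHull B)
    -- lower indefinite cut sets
    (Af Ag : ℚ → Set X)
    (hAf : ∀ t : ℚ, {x | f x < t} ⊆ Af t ∧ Af t ⊆ {x | f x ≤ t})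
    (hAg : ∀ t : ℚ, {x | g x < t} ⊆ Ag t ∧ Ag t ⊆ {x | g x ≤ t})
    (hcut : ∀ t₁ t₂ : ℚ, t₁ < t₂ → ρ (Af t₁) (Ag t₂)) :
    ∃ h : X → ℝ, (∀ U : Set ℝ, IsOpen U → IsClosed (h ⁻¹' U)) ∧ g ≤ h ∧ h ≤ f :=
  insertion_contraContinuous_general hΛ f g ρ hρ1 hρ3 Af Ag hAf hAg hcut
end

section
/- Let X be a topological space in which every Λ-set is open. If f is lower semi-contra-continuous, g is upper semi-contra-continuous, g ≤ f, and X is extremally disconnected, then there exists a contra-continuous function h on X with g ≤ h ≤ f. -/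
/-!
Every Λ-set being open says that arbitrary intersections of open sets are open, i.e. `X` is
Alexandrov-discrete, hence locally connected: connected components are clopen and any function
constant on them has closed preimages. In an extremally disconnected space, for `y` in the
component of `x` we get `g x ≤ f y`: the closure of the open set `{z | g x ≤ g z}` is clopen,
contains `x` and lies in the closed set `{z | s < f z}` for every `s < g x`. Thus
`h x = sup (g '' component x)` is squeezed between `g` and `f`.
-/

open Set

variable {X : Type*} [TopologicalSpace X]

theorem AlexandrovDiscrete.of_isOpen_of_eq_kernelSet
    (hΛ : ∀ A : Set X, A = kernelSet A → IsOpen A) : AlexandrovDiscrete X where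
  isOpen_sInter _ hS := hΛ _ <| subset_antisymm (fun _ hx _ hO => hO.2 hx)
    fun _ hx O hO => hx O ⟨hS O hO, sInter_subset_of_mem hO⟩

theorem le_of_mem_connectedComponent [ExtremallyDisconnected X] {α : Type*} [LinearOrder α]
    {f g : X → α} (hf : ∀ t, IsClosed (f ⁻¹' Ioi t)) (hg : ∀ t, IsClosed (g ⁻¹' Iio t))
    (hgf : g ≤ f) {x y : X} (hy : y ∈ connectedComponent x) : g x ≤ f y := by
  refine le_of_forall_lt fun s hs => ?_
  set V := g ⁻¹' Ici (g x)
  have hV : IsOpen V := by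
    simpa only [V, ← compl_Iio, preimage_compl] using (hg (g x)).isOpen_compl
  have hVf : closure V ⊆ f ⁻¹' Ioi s :=
    closure_minimal (fun z hz => hs.trans_le (le_trans hz (hgf z))) (hf s)
  have hV_clopen : IsClopen (closure V) :=
    ⟨isClosed_closure, ExtremallyDisconnected.open_closure V hV⟩
  exact hVf (hV_clopen.connectedComponent_subset (subset_closure le_rfl) hy)

theorem exists_forall_isClosed_preimage_between [LocallyConnectedSpace X]
    [ExtremallyDisconnected X] {α : Type*} [ConditionallyCompleteLinearOrder α]
    {f g : X → α} (hf : ∀ t, IsClosed (f ⁻¹' Ioi t)) (hg : ∀ t, IsClosed (g ⁻¹' Iio t))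
    (hgf : g ≤ f) : ∃ h : X → α, (∀ U : Set α, IsClosed (h ⁻¹' U)) ∧ g ≤ h ∧ h ≤ f := by
  let H : ConnectedComponents X → α := fun c => sSup (g '' (ConnectedComponents.mk ⁻¹' {c}))
  have hH : ∀ x : X, H x = sSup (g '' connectedComponent x) := fun x => by
    simp only [H, connectedComponents_preimage_singleton]
  have hle : ∀ x, ∀ y ∈ connectedComponent x, g y ≤ f x := fun x y hy =>
    le_of_mem_connectedComponent hf hg hgf (connectedComponent_eq hy ▸ mem_connectedComponent)
  have hbdd : ∀ x, BddAbove (g '' connectedComponent x) :=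
    fun x => ⟨f x, forall_mem_image.2 (hle x)⟩
  refine ⟨fun x => H x, fun U => (isClosed_discrete (H ⁻¹' U)).preimage
    ConnectedComponents.continuous_coe, fun x => ?_, fun x => ?_⟩
  · show g x ≤ H x
    rw [hH]
    exact le_csSup (hbdd x) (mem_image_of_mem g mem_connectedComponent)
  · show H x ≤ f x
    rw [hH]
    exact csSup_le (image_nonempty.2 ⟨x, mem_connectedComponent⟩) (forall_mem_image.2 (hle x))

theorem insertion_contraContinuous_extremallyDisconnected
    [ExtremallyDisconnected X]
    (hΛ : ∀ A : Set X, A = kernelSet A → IsOpen A)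
    (f g : X → ℝ)
    (hf : ∀ t : ℝ, IsClosed (f ⁻¹' Set.Ioi t))
    (hg : ∀ t : ℝ, IsClosed (g ⁻¹' Set.Iio t))
    (hgf : g ≤ f) :
    ∃ h : X → ℝ, (∀ U : Set ℝ, IsOpen U → IsClosed (h ⁻¹' U)) ∧ g ≤ h ∧ h ≤ f := by
  have := AlexandrovDiscrete.of_isOpen_of_eq_kernelSet hΛ
  obtain ⟨h, hclosed, hgh, hhf⟩ := exists_forall_isClosed_preimage_between hf hg hgf
  exact ⟨h, fun U _ => hclosed U, hgh, hhf⟩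
end

section
/- Let X be a normal topological space in which every Λ-set is open. If f is lower semi-contra-continuous, g is upper semi-contra-continuous, and f ≤ g, then there exists a contra-continuous function h on X with f ≤ h ≤ g. -/
open Set

variable {X : Type*} [TopologicalSpace X]

lemma subset_kernelSet' (A : Set X) : A ⊆ kernelSet A :=
  fun _ hx O hO => hO.2 hx

lemma kernelSet_idem (A : Set X) : kernelSet A = kernelSet (kernelSet A) := by
  refine subset_antisymm (subset_kernelSet' _) ?_
  intro x hx O hO
  exact hx O ⟨hO.1, fun y hy => hy O hO⟩

theorem insertion_contraContinuous_normal
    [NormalSpace X]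
    (hΛ : ∀ A : Set X, A = kernelSet A → IsOpen A)
    (f g : X → ℝ)
    (hf : ∀ t : ℝ, IsClosed (f ⁻¹' Set.Ioi t))
    (hg : ∀ t : ℝ, IsClosed (g ⁻¹' Set.Iio t))
    (hfg : f ≤ g) :
    ∃ h : X → ℝ, (∀ U : Set ℝ, IsOpen U → IsClosed (h ⁻¹' U)) ∧ f ≤ h ∧ h ≤ g := by
  classical
  -- the specialization-type preorder: opens are up-sets
  set r : X → X → Prop := fun x y => ∀ O : Set X, IsOpen O → x ∈ O → y ∈ O with hr_def
  have r_refl : ∀ x, r x x := fun x O _ h => h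
  have r_trans : ∀ {x y z}, r x y → r y z → r x z :=
    fun hxy hyz O hO hx => hyz O hO (hxy O hO hx)
  -- closed sets are down-sets
  have downClosed : ∀ {C : Set X} {x y : X}, IsClosed C → r x y → y ∈ C → x ∈ C := by
    intro C x y hC hr hy
    by_contra hx
    exact hr Cᶜ hC.isOpen_compl hx hy
  -- f is antitone, g is monotone w.r.t. r
  have f_anti : ∀ {x y}, r x y → f y ≤ f x := by
    intro x y hr
    refine le_of_forall_lt fun t ht => ?_
    exact downClosed (hf t) hr ht
  have g_mono : ∀ {x y}, r x y → g x ≤ g y := by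
    intro x y hr
    refine le_of_not_gt fun hlt => ?_
    exact lt_irrefl (g x) (downClosed (hg (g x)) hr hlt)
  -- normality: common upper bound implies common lower bound
  have clb : ∀ x y z, r x z → r y z → ∃ w, r w x ∧ r w y := by
    intro x y z hxz hyz
    by_cases hd : Disjoint (closure {x}) (closure {y})
    · obtain ⟨U, V, hU, hV, hxU, hyV, hUV⟩ :=
        NormalSpace.normal (closure {x}) (closure {y}) isClosed_closure isClosed_closure hd
      have hzU : z ∈ U := hxz U hU (hxU (subset_closure rfl))
      have hzV : z ∈ V := hyz V hV (hyV (subset_closure rfl))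
      exact absurd (hUV.ne_of_mem hzU hzV) (fun h => h rfl)
    · rw [Set.not_disjoint_iff] at hd
      obtain ⟨w, hwx, hwy⟩ := hd
      refine ⟨w, ?_, ?_⟩
      · intro O hO hw
        obtain ⟨u, hu1, hu2⟩ := (mem_closure_iff.1 hwx) O hO hw
        rwa [hu2] at hu1
      · intro O hO hw
        obtain ⟨u, hu1, hu2⟩ := (mem_closure_iff.1 hwy) O hO hw
        rwa [hu2] at hu1
  -- the zigzag connectivity relation
  set s : X → X → Prop := fun x y => r x y ∨ r y x with hs_def
  set c : X → X → Prop := Relation.ReflTransGen s with hc_def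
  have c_symm : ∀ {x y}, c x y → c y x := by
    intro x y h
    exact (@Relation.ReflTransGen.stdSymm _ s ⟨fun a b hab => hab.symm⟩).symm _ _ h
  have c_trans : ∀ {x y z}, c x y → c y z → c x z := fun h1 h2 => h1.trans h2
  -- connected points have a common lower bound
  have c_clb : ∀ {x y}, c x y → ∃ w, r w x ∧ r w y := by
    intro x y hc
    induction hc with
    | refl => exact ⟨x, r_refl x, r_refl x⟩
    | tail hxb hby ih =>
      obtain ⟨w, hwx, hwb⟩ := ih
      rcases hby with hby | hyb
      · exact ⟨w, hwx, r_trans hwb hby⟩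
      · obtain ⟨v, hvw, hvy⟩ := clb w _ _ hwb hyb
        exact ⟨v, r_trans hvw hwx, hvy⟩
  -- the key inequality across components
  have key : ∀ {x y}, c x y → f x ≤ g y := by
    intro x y hc
    obtain ⟨w, hwx, hwy⟩ := c_clb hc
    calc f x ≤ f w := f_anti hwx
      _ ≤ g w := hfg w
      _ ≤ g y := g_mono hwy
  -- define h as sup of f over the component
  set h : X → ℝ := fun x => sSup (f '' {y | c x y}) with hh_def
  have hne : ∀ x, (f '' {y | c x y}).Nonempty :=
    fun x => ⟨f x, x, Relation.ReflTransGen.refl, rfl⟩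
  have hbdd : ∀ x, ∀ z ∈ f '' {y | c x y}, z ≤ g x := by
    rintro x _ ⟨y, hy, rfl⟩
    exact key (c_symm hy)
  have hfh : ∀ x, f x ≤ h x :=
    fun x => le_csSup ⟨g x, hbdd x⟩ ⟨x, Relation.ReflTransGen.refl, rfl⟩
  have hhg : ∀ x, h x ≤ g x := fun x => csSup_le (hne x) (hbdd x)
  -- h is constant on components
  have hconst : ∀ {x y}, c x y → h x = h y := by
    intro x y hc
    have : {z | c x z} = {z | c y z} := by
      ext z
      exact ⟨fun hz => c_trans (c_symm hc) hz, fun hz => c_trans hc hz⟩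
    simp only [hh_def, this]
  -- up-sets are open (Alexandrov, from hΛ)
  have upOpen : ∀ U : Set X, (∀ a b, r a b → a ∈ U → b ∈ U) → IsOpen U := by
    intro U hU
    have hUeq : U = ⋃ x ∈ U, kernelSet {x} := by
      ext y
      simp only [mem_iUnion, exists_prop]
      constructor
      · intro hy
        exact ⟨y, hy, subset_kernelSet' {y} rfl⟩
      · rintro ⟨x, hx, hy⟩
        have hrxy : r x y := fun O hO hxO => hy O ⟨hO, singleton_subset_iff.2 hxO⟩
        exact hU x y hrxy hx
    rw [hUeq]
    exact isOpen_biUnion fun x _ => hΛ _ (kernelSet_idem _)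
  refine ⟨h, ?_, hfh, hhg⟩
  intro U hU
  rw [← isOpen_compl_iff]
  apply upOpen
  intro a b hab ha hb
  have : c a b := Relation.ReflTransGen.single (Or.inl hab)
  exact ha (by rwa [Set.mem_preimage, ← hconst this] at hb)
end

section
/- Let X be a topological space in which every Λ-set is a G_δ-set, and suppose that for each pair of disjoint G_δ-sets G₀, G₁ there exist disjoint F_σ-sets F₀ ⊇ G₀ and F₁ ⊇ G₁. If f is lower semi-Baire-one, g is upper semi-Baire-one, and g ≤ f, then there exists a Baire-one function h on X with g ≤ h ≤ f. -/
open Set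

variable {X : Type*} [TopologicalSpace X]

/-!
Under the hypothesis on Λ-sets, the G_δ sets are closed under arbitrary unions, so they form a
topology whose closed sets are the F_σ sets, and the separation hypothesis makes it extremally
disconnected: the F_σ-hull of a G_δ set is again G_δ. For this topology `f` is upper and `g` lower
semicontinuous, and `h x = inf {q ∈ ℚ | x ∈ hull {f < q}}` lies between them. Its sublevel sets
`{h < t}` are countable unions of sets that are both F_σ and G_δ; such sets form a σ-algebra, so
`h` is Borel measurable for it, which makes every `h ⁻¹' U` with `U` open an F_σ set.
-/

theorem isFsigma_empty : IsFsigma (∅ : Set X) :=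
  ⟨∅, countable_empty, by simp, by simp⟩

theorem isFsigma_iUnion {ι : Sort*} [Countable ι] {s : ι → Set X} (hs : ∀ i, IsFsigma (s i)) :
    IsFsigma (⋃ i, s i) := by
  choose S hSc hSF hsS using hs
  refine ⟨⋃ i, S i, countable_iUnion hSc, fun F hF => ?_, by rw [sUnion_iUnion, iUnion_congr hsS]⟩
  obtain ⟨i, hi⟩ := mem_iUnion.1 hF
  exact hSF i F hi

theorem IsGδ.isFsigma_compl {A : Set X} (hA : IsGδ A) : IsFsigma Aᶜ := by
  obtain ⟨T, hTo, hTc, rfl⟩ := hA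
  refine ⟨compl '' T, hTc.image _, ?_, compl_sInter T⟩
  rintro F ⟨O, hO, rfl⟩
  exact (hTo O hO).isClosed_compl

theorem IsFsigma.isGδ_compl {A : Set X} (hA : IsFsigma A) : IsGδ Aᶜ := by
  obtain ⟨S, hSc, hSF, rfl⟩ := hA
  refine ⟨compl '' S, ?_, hSc.image _, compl_sUnion S⟩
  rintro O ⟨F, hF, rfl⟩
  exact (hSF F hF).isOpen_compl

theorem isFsigma_sUnion_of_isClosed (hΛ : ∀ A : Set X, A = kernelSet A → IsGδ A)
    {S : Set (Set X)} (hS : ∀ F ∈ S, IsClosed F) : IsFsigma (⋃₀ S) := by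
  have hker : (⋃₀ S)ᶜ = kernelSet (⋃₀ S)ᶜ := by
    refine (subset_sInter fun O hO => hO.2).antisymm ?_
    rintro x hx ⟨F, hF, hxF⟩
    exact hx Fᶜ ⟨(hS F hF).isOpen_compl, compl_subset_compl.2 (subset_sUnion_of_mem hF)⟩ hxF
  simpa using (hΛ _ hker).isFsigma_compl

theorem isFsigma_iInter (hΛ : ∀ A : Set X, A = kernelSet A → IsGδ A)
    {ι : Sort*} {s : ι → Set X} (hs : ∀ i, IsFsigma (s i)) : IsFsigma (⋂ i, s i) := by
  have hclosed : ∀ x ∈ ⋂ i, s i, ∃ C, IsClosed C ∧ x ∈ C ∧ C ⊆ ⋂ i, s i := by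
    intro x hx
    have hxC : ∀ i, ∃ C, IsClosed C ∧ x ∈ C ∧ C ⊆ s i := fun i => by
      obtain ⟨S, -, hSF, hsS⟩ := hs i
      obtain ⟨C, hC, hxC⟩ := hsS ▸ mem_iInter.1 hx i
      exact ⟨C, hSF C hC, hxC, hsS ▸ subset_sUnion_of_mem hC⟩
    choose C hCF hxC hCs using hxC
    exact ⟨⋂ i, C i, isClosed_iInter hCF, mem_iInter.2 hxC, iInter_mono hCs⟩
  have hunion : ⋂ i, s i = ⋃₀ {C | IsClosed C ∧ C ⊆ ⋂ i, s i} :=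
    Subset.antisymm (fun x hx => (hclosed x hx).imp fun C hC => ⟨⟨hC.1, hC.2.2⟩, hC.2.1⟩)
      (sUnion_subset fun C hC => hC.2)
  rw [hunion]
  exact isFsigma_sUnion_of_isClosed hΛ fun C hC => hC.1

theorem isGδ_iUnion_of_lambda (hΛ : ∀ A : Set X, A = kernelSet A → IsGδ A)
    {ι : Sort*} {s : ι → Set X} (hs : ∀ i, IsGδ (s i)) : IsGδ (⋃ i, s i) := by
  simpa using (isFsigma_iInter hΛ fun i => (hs i).isFsigma_compl).isGδ_compl

abbrev ambiguousMeasurableSpace (hΛ : ∀ A : Set X, A = kernelSet A → IsGδ A) :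
    MeasurableSpace X where
  MeasurableSet' s := IsFsigma s ∧ IsGδ s
  measurableSet_empty := ⟨isFsigma_empty, .empty⟩
  measurableSet_compl _ hs := ⟨hs.2.isFsigma_compl, hs.1.isGδ_compl⟩
  measurableSet_iUnion _ hs :=
    ⟨isFsigma_iUnion fun i => (hs i).1, isGδ_iUnion_of_lambda hΛ fun i => (hs i).2⟩

def fsigmaHull (U : Set X) : Set X := ⋂₀ {F | IsFsigma F ∧ U ⊆ F}

theorem subset_fsigmaHull (U : Set X) : U ⊆ fsigmaHull U :=
  subset_sInter fun _ hF => hF.2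

theorem fsigmaHull_subset {U F : Set X} (hF : IsFsigma F) (hUF : U ⊆ F) : fsigmaHull U ⊆ F :=
  sInter_subset_of_mem ⟨hF, hUF⟩

theorem isFsigma_fsigmaHull (hΛ : ∀ A : Set X, A = kernelSet A → IsGδ A) (U : Set X) :
    IsFsigma (fsigmaHull U) := by
  rw [fsigmaHull, sInter_eq_iInter]
  exact isFsigma_iInter hΛ fun F => F.2.1

theorem isGδ_fsigmaHull
    (hsep : ∀ G₀ G₁ : Set X, IsGδ G₀ → IsGδ G₁ → Disjoint G₀ G₁ →
      ∃ F₀ F₁ : Set X, IsFsigma F₀ ∧ IsFsigma F₁ ∧ G₀ ⊆ F₀ ∧ G₁ ⊆ F₁ ∧ Disjoint F₀ F₁)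
    (hΛ : ∀ A : Set X, A = kernelSet A → IsGδ A) {U : Set X} (hU : IsGδ U) :
    IsGδ (fsigmaHull U) := by
  obtain ⟨F₀, F₁, hF₀, hF₁, hUF₀, hF₁U, hF₀F₁⟩ :=
    hsep U _ hU (isFsigma_fsigmaHull hΛ U).isGδ_compl
      (disjoint_compl_right.mono_left (subset_fsigmaHull U))
  -- `hull ⊆ F₀ ⊆ F₁ᶜ ⊆ hull`
  have hhull : fsigmaHull U = F₁ᶜ :=
    ((fsigmaHull_subset hF₀ hUF₀).trans hF₀F₁.subset_compl_right).antisymm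
      (compl_subset_comm.1 hF₁U)
  exact hhull ▸ hF₁.isGδ_compl

theorem isFsigma_preimage_Iic (hΛ : ∀ A : Set X, A = kernelSet A → IsGδ A) {g : X → ℝ}
    (hg : ∀ t : ℝ, IsFsigma (g ⁻¹' Iio t)) (t : ℝ) : IsFsigma (g ⁻¹' Iic t) := by
  have h : g ⁻¹' Iic t = ⋂ (r : ℝ) (_ : t < r), g ⁻¹' Iio r := by
    ext x
    simpa using ⟨fun hx r hr => hx.trans_lt hr, fun hx => le_of_forall_gt_imp_ge_of_dense
      fun r hr => (hx r hr).le⟩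
  rw [h]
  exact isFsigma_iInter hΛ fun r => isFsigma_iInter hΛ fun _ => hg r

theorem isGδ_preimage_Iio (hΛ : ∀ A : Set X, A = kernelSet A → IsGδ A) {f : X → ℝ}
    (hf : ∀ t : ℝ, IsFsigma (f ⁻¹' Ioi t)) (t : ℝ) : IsGδ (f ⁻¹' Iio t) := by
  have h : (f ⁻¹' Iio t)ᶜ = ⋂ (r : ℝ) (_ : r < t), f ⁻¹' Ioi r := by
    ext x
    simpa using ⟨fun hx r hr => hr.trans_le hx, fun hx => le_of_forall_lt_imp_le_of_dense
      fun r hr => (hx r hr).le⟩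
  rw [← compl_compl (f ⁻¹' Iio t), h]
  exact (isFsigma_iInter hΛ fun r => isFsigma_iInter hΛ fun _ => hf r).isGδ_compl

theorem exists_between_preimage_Iio_eq_iUnion {α : Type*} {f g : α → ℝ} {C : ℚ → Set α}
    (hfC : ∀ (q : ℚ) x, f x < q → x ∈ C q) (hCg : ∀ (q : ℚ), ∀ x ∈ C q, g x ≤ q) :
    ∃ h : α → ℝ, g ≤ h ∧ h ≤ f ∧ ∀ t, h ⁻¹' Iio t = ⋃ (q : ℚ) (_ : (q : ℝ) < t), C q := by
  set Q : α → Set ℝ := fun x => (↑) '' {q : ℚ | x ∈ C q}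
  have hQ : ∀ x, (Q x).Nonempty := fun x =>
    let ⟨q, hq⟩ := exists_rat_gt (f x); ⟨q, q, hfC q x hq, rfl⟩
  have hgQ : ∀ x, ∀ t ∈ Q x, g x ≤ t := by
    rintro x _ ⟨q, hq, rfl⟩
    exact hCg q x hq
  have hle : ∀ x (q : ℚ), x ∈ C q → sInf (Q x) ≤ q := fun x q hq =>
    csInf_le ⟨g x, hgQ x⟩ ⟨q, hq, rfl⟩
  refine ⟨fun x => sInf (Q x), fun x => le_csInf (hQ x) (hgQ x),
    fun x => le_of_forall_lt_rat_imp_le fun q hq => hle x q (hfC q x hq), fun t => ?_⟩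
  ext x
  simp only [mem_preimage, mem_Iio, mem_iUnion]
  constructor
  · intro hx
    obtain ⟨_, ⟨q, hq, rfl⟩, hqt⟩ := exists_lt_of_csInf_lt (hQ x) hx
    exact ⟨q, hqt, hq⟩
  · rintro ⟨q, hqt, hq⟩
    exact (hle x q hq).trans_lt hqt

theorem insertion_baireOne_of_Gdelta_separation
    (hΛ : ∀ A : Set X, A = kernelSet A → IsGδ A)
    (hsep : ∀ G₀ G₁ : Set X, IsGδ G₀ → IsGδ G₁ → Disjoint G₀ G₁ →
      ∃ F₀ F₁ : Set X, IsFsigma F₀ ∧ IsFsigma F₁ ∧ G₀ ⊆ F₀ ∧ G₁ ⊆ F₁ ∧ Disjoint F₀ F₁)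
    (f g : X → ℝ)
    (hf : ∀ t : ℝ, IsFsigma (f ⁻¹' Set.Ioi t))
    (hg : ∀ t : ℝ, IsFsigma (g ⁻¹' Set.Iio t))
    (hgf : g ≤ f) :
    ∃ h : X → ℝ, (∀ U : Set ℝ, IsOpen U → IsFsigma (h ⁻¹' U)) ∧ g ≤ h ∧ h ≤ f := by
  let _ : MeasurableSpace X := ambiguousMeasurableSpace hΛ
  let C : ℚ → Set X := fun q => fsigmaHull (f ⁻¹' Iio q)
  have hCg : ∀ q : ℚ, ∀ x ∈ C q, g x ≤ q := fun q =>
    fsigmaHull_subset (isFsigma_preimage_Iic hΛ hg q) fun x hx => (hgf x).trans (le_of_lt hx)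
  obtain ⟨h, hgh, hhf, hIio⟩ :=
    exists_between_preimage_Iio_eq_iUnion (C := C) (fun q x hx => subset_fsigmaHull _ hx) hCg
  have hC : ∀ q, MeasurableSet (C q) := fun q =>
    ⟨isFsigma_fsigmaHull hΛ _, isGδ_fsigmaHull hsep hΛ (isGδ_preimage_Iio hΛ hf q)⟩
  have hmeas : Measurable h := measurable_of_Iio fun t =>
    hIio t ▸ .iUnion fun q => .iUnion fun _ => hC q
  exact ⟨h, fun U hU => (hmeas hU.measurableSet).1, hgh, hhf⟩
end

section
/- If g and f are real-valued functions on a normal topological space X with f lower semicontinuous, g upper semicontinuous, and g ≤ f, then there exists a continuous function h : X → ℝ with g ≤ h ≤ f. -/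
open Set

variable {X : Type*} [TopologicalSpace X]

open Real Filter Topology

/-- One approximation step: improve an `ε`-approximate insertion to a `3ε/4` one,
moving by at most `ε/2`. -/
lemma kt_step [NormalSpace X] {g' f' : X → ℝ} (hg' : UpperSemicontinuous g')
    (hf' : LowerSemicontinuous f') (hle : ∀ x, g' x ≤ f' x)
    {h : X → ℝ} (hc : Continuous h) {ε : ℝ} (hε : 0 < ε)
    (h1 : ∀ x, g' x - ε ≤ h x) (h2 : ∀ x, h x ≤ f' x + ε) :
    ∃ h' : X → ℝ, Continuous h' ∧ (∀ x, g' x - 3 / 4 * ε ≤ h' x) ∧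
      (∀ x, h' x ≤ f' x + 3 / 4 * ε) ∧ ∀ x, |h' x - h x| ≤ ε / 2 := by
  set A : Set X := (fun x => g' x + (-h x)) ⁻¹' Ici (ε / 4) with hAdef
  set B : Set X := (fun x => f' x + (-h x)) ⁻¹' Iic (-(ε / 4)) with hBdef
  have hmemA : ∀ x, x ∈ A ↔ ε / 4 ≤ g' x - h x := by
    intro x; simp [hAdef, sub_eq_add_neg]
  have hmemB : ∀ x, x ∈ B ↔ f' x - h x ≤ -(ε / 4) := by
    intro x; simp [hBdef, sub_eq_add_neg]
  have hA : IsClosed A := by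
    have husc : UpperSemicontinuous fun x => g' x + (-h x) :=
      hg'.add hc.neg.upperSemicontinuous
    exact upperSemicontinuous_iff_isClosed_preimage.1 husc (ε / 4)
  have hB : IsClosed B := by
    have hlsc : LowerSemicontinuous fun x => f' x + (-h x) :=
      hf'.add hc.neg.lowerSemicontinuous
    exact lowerSemicontinuous_iff_isClosed_preimage.1 hlsc (-(ε / 4))
  have hdisj : Disjoint A B := by
    rw [Set.disjoint_left]
    intro x hxA hxB
    have h3 := hle x
    rw [hmemA] at hxA
    rw [hmemB] at hxB
    linarith
  obtain ⟨w, hw0, hw1, hw01⟩ := exists_continuous_zero_one_of_isClosed hA hB hdisj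
  refine ⟨fun x => h x + (ε / 2 - ε * w x), by continuity, ?_, ?_, ?_⟩
  · intro x
    show g' x - 3 / 4 * ε ≤ h x + (ε / 2 - ε * w x)
    by_cases hx : x ∈ A
    · have hwx0 : w x = 0 := hw0 hx
      rw [hwx0, mul_zero]
      have := h1 x
      linarith
    · have hxA : g' x - h x < ε / 4 := by
        rw [hmemA, not_le] at hx; exact hx
      have hwx := (hw01 x).2
      have hε2 : ε * w x ≤ ε := by nlinarith [(hw01 x).1]
      linarith
  · intro x
    show h x + (ε / 2 - ε * w x) ≤ f' x + 3 / 4 * ε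
    by_cases hx : x ∈ B
    · have hwx1 : w x = 1 := hw1 hx
      rw [hwx1, mul_one]
      have := h2 x
      linarith
    · have hxB : -(ε / 4) < f' x - h x := by
        rw [hmemB, not_le] at hx; exact hx
      have hwx : 0 ≤ ε * w x := by nlinarith [(hw01 x).1]
      linarith
  · intro x
    show |h x + (ε / 2 - ε * w x) - h x| ≤ ε / 2
    have h0 := (hw01 x).1
    have h1' := (hw01 x).2
    rw [abs_le]
    constructor <;> nlinarith

theorem katetov_tong_insertion
    [NormalSpace X]
    (f g : X → ℝ)
    (hf : ∀ t : ℝ, IsOpen (f ⁻¹' Set.Ioi t))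
    (hg : ∀ t : ℝ, IsOpen (g ⁻¹' Set.Iio t))
    (hgf : g ≤ f) :
    ∃ h : X → ℝ, Continuous h ∧ g ≤ h ∧ h ≤ f := by
  classical
  -- transport to `(-π/2, π/2)` via `arctan`
  set g' : X → ℝ := fun x => arctan (g x) with hg'def
  set f' : X → ℝ := fun x => arctan (f x) with hf'def
  have hgusc : UpperSemicontinuous g := by
    rw [upperSemicontinuous_iff_isOpen_preimage]; exact hg
  have hflsc : LowerSemicontinuous f := by
    rw [lowerSemicontinuous_iff_isOpen_preimage]; exact hf
  have hg' : UpperSemicontinuous g' :=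
    continuous_arctan.comp_upperSemicontinuous hgusc arctan_strictMono.monotone
  have hf' : LowerSemicontinuous f' :=
    continuous_arctan.comp_lowerSemicontinuous hflsc arctan_strictMono.monotone
  have hle : ∀ x, g' x ≤ f' x := fun x => arctan_strictMono.monotone (hgf x)
  have hg'lt : ∀ x, g' x < π / 2 := fun x => arctan_lt_pi_div_two _
  have hf'gt : ∀ x, -(π / 2) < f' x := fun x => neg_pi_div_two_lt_arctan _
  set ε : ℕ → ℝ := fun n => π / 2 * (3 / 4) ^ n with hεdef
  have hεpos : ∀ n, 0 < ε n := fun n => by positivity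
  have hεsucc : ∀ n, ε (n + 1) = 3 / 4 * ε n := by
    intro n; simp only [hεdef, pow_succ]; ring
  set P : ℕ → (X → ℝ) → Prop := fun n φ =>
    Continuous φ ∧ (∀ x, g' x - ε n ≤ φ x) ∧ (∀ x, φ x ≤ f' x + ε n) with hPdef
  have step : ∀ n (φ : X → ℝ), P n φ →
      ∃ ψ : X → ℝ, P (n + 1) ψ ∧ ∀ x, |ψ x - φ x| ≤ ε n / 2 := by
    intro n φ ⟨hφc, hφ1, hφ2⟩
    obtain ⟨ψ, hψc, hψ1, hψ2, hψd⟩ := kt_step hg' hf' hle hφc (hεpos n) hφ1 hφ2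
    exact ⟨ψ, ⟨hψc, by rw [hεsucc n]; exact hψ1, by rw [hεsucc n]; exact hψ2⟩, hψd⟩
  choose! nxt hnxt hclose using step
  set seq : ℕ → X → ℝ := fun n => Nat.rec (motive := fun _ => X → ℝ) (fun _ => 0) (fun k φ => nxt k φ) n with hseqdef
  have hseq0 : seq 0 = fun _ => 0 := rfl
  have hseqsucc : ∀ n, seq (n + 1) = nxt n (seq n) := fun n => rfl
  have hP0 : P 0 (seq 0) := by
    refine ⟨continuous_const, fun x => ?_, fun x => ?_⟩
    · have := hg'lt x
      simp only [hseq0, hεdef, pow_zero, mul_one]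
      linarith
    · have := hf'gt x
      simp only [hseq0, hεdef, pow_zero, mul_one]
      linarith
  have hP : ∀ n, P n (seq n) := by
    intro n
    induction n with
    | zero => exact hP0
    | succ k ih => rw [hseqsucc]; exact hnxt k (seq k) ih
  have hcl : ∀ n x, |seq (n + 1) x - seq n x| ≤ ε n / 2 := by
    intro n x
    have := hclose n (seq n) (hP n) x
    rwa [hseqsucc]
  -- the increments
  set u : ℕ → X → ℝ := fun n x => seq (n + 1) x - seq n x with hudef
  have hubound : ∀ n x, ‖u n x‖ ≤ π / 4 * (3 / 4) ^ n := by
    intro n x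
    have := hcl n x
    simp only [hudef, Real.norm_eq_abs]
    calc |seq (n + 1) x - seq n x| ≤ ε n / 2 := this
      _ = π / 4 * (3 / 4) ^ n := by simp only [hεdef]; ring
  have hsummable : Summable (fun n : ℕ => π / 4 * (3 / 4) ^ n) :=
    (summable_geometric_of_lt_one (by norm_num) (by norm_num)).mul_left _
  have hucont : ∀ n, Continuous (u n) := by
    intro n
    exact ((hP (n + 1)).1).sub ((hP n).1)
  set hInf : X → ℝ := fun x => ∑' n, u n x with hhdef
  have hcont : Continuous hInf := continuous_tsum hucont hsummable fun n x => hubound n x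
  have hsumx : ∀ x, Summable fun n => u n x := fun x =>
    Summable.of_norm_bounded hsummable (fun n => hubound n x)
  have htendsto : ∀ x, Tendsto (fun n => seq n x) atTop (𝓝 (hInf x)) := by
    intro x
    have := (hsumx x).hasSum.tendsto_sum_nat
    have heq : ∀ n, ∑ i ∈ Finset.range n, u i x = seq n x := by
      intro n
      have := Finset.sum_range_sub (fun i => seq i x) n
      simpa [hudef, hseq0] using this
    simpa only [heq] using this
  have hεlim : Tendsto ε atTop (𝓝 0) := by
    have : Tendsto (fun n : ℕ => (3 / 4 : ℝ) ^ n) atTop (𝓝 0) :=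
      tendsto_pow_atTop_nhds_zero_of_lt_one (by norm_num) (by norm_num)
    simpa only [hεdef, mul_zero] using this.const_mul (π / 2)
  have hlow : ∀ x, g' x ≤ hInf x := by
    intro x
    have h1 : Tendsto (fun n => g' x - ε n) atTop (𝓝 (g' x)) := by
      simpa using (tendsto_const_nhds (x := g' x)).sub hεlim
    exact le_of_tendsto_of_tendsto' h1 (htendsto x) fun n => (hP n).2.1 x
  have hhigh : ∀ x, hInf x ≤ f' x := by
    intro x
    have h1 : Tendsto (fun n => f' x + ε n) atTop (𝓝 (f' x)) := by
      simpa using (tendsto_const_nhds (x := f' x)).add hεlim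
    exact le_of_tendsto_of_tendsto' (htendsto x) h1 fun n => (hP n).2.2 x
  have hg'gt : ∀ x, -(π / 2) < g' x := fun x => neg_pi_div_two_lt_arctan _
  have hf'lt : ∀ x, f' x < π / 2 := fun x => arctan_lt_pi_div_two _
  have hmem : ∀ x, hInf x ∈ Ioo (-(π / 2)) (π / 2) := fun x =>
    ⟨lt_of_lt_of_le (hg'gt x) (hlow x), lt_of_le_of_lt (hhigh x) (hf'lt x)⟩
  refine ⟨fun x => tan (hInf x), ?_, ?_, ?_⟩
  · rw [continuous_iff_continuousAt]
    intro x
    have hmx := hmem x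
    exact (continuousAt_tan.2 (ne_of_gt (cos_pos_of_mem_Ioo hmx))).comp hcont.continuousAt
  · intro x
    have : tan (g' x) ≤ tan (hInf x) :=
      strictMonoOn_tan.monotoneOn (arctan_mem_Ioo _) (hmem x) (hlow x)
    simpa only [hg'def, tan_arctan] using this
  · intro x
    have : tan (hInf x) ≤ tan (f' x) :=
      strictMonoOn_tan.monotoneOn (hmem x) (arctan_mem_Ioo _) (hhigh x)
    simpa only [hf'def, tan_arctan] using this
end

section
/- If g and f are real-valued functions on an extremally disconnected topological space X with f lower semicontinuous, g upper semicontinuous, and f ≤ g, then there exists a continuous function h : X → ℝ with f ≤ h ≤ g. -/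
open Set

variable {X : Type*} [TopologicalSpace X]

/-! The closures `A q` of the open sets `{f > q}`, `q ∈ ℚ`, are clopen because `X` is extremally
disconnected, decrease in `q`, and lie between `{f > q}` and `{g ≥ q}` since `{g ≥ q}` is closed.
The function `h x = sup {q | x ∈ A q}` then satisfies `f ≤ h ≤ g`, and the sets `{h > t}` and
`{h < t}` are unions of the clopen sets `A q` and of their complements, so `h` is continuous. -/

section LevelSup

variable {α : Type*} (A : ℚ → Set α)

noncomputable def levelSup (x : α) : ℝ := sSup (((↑) : ℚ → ℝ) '' {q | x ∈ A q})

variable {A} {f g : α → ℝ}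

theorem nonempty_rats_mem (hfA : ∀ q : ℚ, f ⁻¹' Ioi q ⊆ A q) (x : α) :
    (((↑) : ℚ → ℝ) '' {q | x ∈ A q}).Nonempty :=
  let ⟨r, hr⟩ := exists_rat_lt (f x)
  ⟨r, r, hfA r hr, rfl⟩

theorem le_levelSup (hAg : ∀ q : ℚ, A q ⊆ g ⁻¹' Ici q) {q : ℚ} {x : α} (hx : x ∈ A q) :
    (q : ℝ) ≤ levelSup A x :=
  le_csSup ⟨g x, by rintro _ ⟨r, hr, rfl⟩; exact hAg r hr⟩ ⟨q, hx, rfl⟩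

theorem levelSup_le_of_notMem (hA : Antitone A) (hfA : ∀ q : ℚ, f ⁻¹' Ioi q ⊆ A q) {q : ℚ}
    {x : α} (hx : x ∉ A q) : levelSup A x ≤ q := by
  refine csSup_le (nonempty_rats_mem hfA x) ?_
  rintro _ ⟨s, hs, rfl⟩
  by_contra! hqs
  exact hx (hA (by exact_mod_cast hqs.le) hs)

theorem levelSup_le_upper (hfA : ∀ q : ℚ, f ⁻¹' Ioi q ⊆ A q) (hAg : ∀ q : ℚ, A q ⊆ g ⁻¹' Ici q) :
    levelSup A ≤ g := by
  intro x
  refine csSup_le (nonempty_rats_mem hfA x) ?_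
  rintro _ ⟨q, hq, rfl⟩
  exact hAg q hq

theorem lower_le_levelSup (hfA : ∀ q : ℚ, f ⁻¹' Ioi q ⊆ A q)
    (hAg : ∀ q : ℚ, A q ⊆ g ⁻¹' Ici q) : f ≤ levelSup A := by
  intro x
  by_contra! hlt
  obtain ⟨q, hqh, hqf⟩ := exists_rat_btwn hlt
  exact (le_levelSup hAg (hfA q hqf)).not_gt hqh

theorem levelSup_preimage_Ioi (hfA : ∀ q : ℚ, f ⁻¹' Ioi q ⊆ A q)
    (hAg : ∀ q : ℚ, A q ⊆ g ⁻¹' Ici q) (t : ℝ) :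
    levelSup A ⁻¹' Ioi t = ⋃ (q : ℚ) (_ : t < q), A q := by
  ext x
  simp only [mem_preimage, mem_Ioi, mem_iUnion, exists_prop]
  constructor
  · intro ht
    obtain ⟨_, ⟨q, hq, rfl⟩, htq⟩ := exists_lt_of_lt_csSup (nonempty_rats_mem hfA x) ht
    exact ⟨q, htq, hq⟩
  · rintro ⟨q, htq, hq⟩
    exact htq.trans_le (le_levelSup hAg hq)

theorem levelSup_preimage_Iio (hA : Antitone A) (hfA : ∀ q : ℚ, f ⁻¹' Ioi q ⊆ A q)
    (hAg : ∀ q : ℚ, A q ⊆ g ⁻¹' Ici q) (t : ℝ) :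
    levelSup A ⁻¹' Iio t = ⋃ (q : ℚ) (_ : (q : ℝ) < t), (A q)ᶜ := by
  ext x
  simp only [mem_preimage, mem_Iio, mem_iUnion, mem_compl_iff, exists_prop]
  constructor
  · intro ht
    obtain ⟨q, hhq, hqt⟩ := exists_rat_btwn ht
    exact ⟨q, hqt, fun hq => (le_levelSup hAg hq).not_gt hhq⟩
  · rintro ⟨q, hqt, hq⟩
    exact (levelSup_le_of_notMem hA hfA hq).trans_lt hqt

theorem continuous_levelSup [TopologicalSpace α] (hA : Antitone A)
    (hA_clopen : ∀ q, IsClopen (A q)) (hfA : ∀ q : ℚ, f ⁻¹' Ioi q ⊆ A q)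
    (hAg : ∀ q : ℚ, A q ⊆ g ⁻¹' Ici q) : Continuous (levelSup A) := by
  rw [continuous_iff_lower_upperSemicontinuous, lowerSemicontinuous_iff_isOpen_preimage,
    upperSemicontinuous_iff_isOpen_preimage]
  refine ⟨fun t => ?_, fun t => ?_⟩
  · rw [levelSup_preimage_Ioi hfA hAg]
    exact isOpen_biUnion fun q _ => (hA_clopen q).isOpen
  · rw [levelSup_preimage_Iio hA hfA hAg]
    exact isOpen_biUnion fun q _ => (hA_clopen q).compl.isOpen

end LevelSup

theorem isClopen_closure_of_isOpen [ExtremallyDisconnected X] {U : Set X} (hU : IsOpen U) :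
    IsClopen (closure U) :=
  ⟨isClosed_closure, ExtremallyDisconnected.open_closure U hU⟩

theorem insertion_extremallyDisconnected_continuous
    [ExtremallyDisconnected X]
    (f g : X → ℝ)
    (hf : ∀ t : ℝ, IsOpen (f ⁻¹' Set.Ioi t))
    (hg : ∀ t : ℝ, IsOpen (g ⁻¹' Set.Iio t))
    (hfg : f ≤ g) :
    ∃ h : X → ℝ, Continuous h ∧ f ≤ h ∧ h ≤ g := by
  let A : ℚ → Set X := fun q => closure (f ⁻¹' Ioi q)
  have hA : Antitone A := fun q r hqr =>
    closure_mono <| preimage_mono <| Ioi_subset_Ioi (by exact_mod_cast hqr)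
  have hA_clopen : ∀ q, IsClopen (A q) := fun q => isClopen_closure_of_isOpen (hf q)
  have hfA : ∀ q : ℚ, f ⁻¹' Ioi q ⊆ A q := fun q => subset_closure
  have hAg : ∀ q : ℚ, A q ⊆ g ⁻¹' Ici q := fun q =>
    closure_minimal (fun x hx => (mem_Ioi.1 hx).le.trans (hfg x))
      ((upperSemicontinuous_iff_isOpen_preimage.2 hg).isClosed_preimage q)
  exact ⟨levelSup A, continuous_levelSup hA hA_clopen hfA hAg,
    lower_le_levelSup hfA hAg, levelSup_le_upper hfA hAg⟩
end

section
/- Suppose X is a topological space in which every Λ-set is open, and for every pair of real functions f lower semi-contra-continuous and g upper semi-contra-continuous with g ≤ f there exists a contra-continuous h with g ≤ h ≤ f. Then X is extremally disconnected. -/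
open Set

variable {X : Type*} [TopologicalSpace X]

/-!
Take an open `U` and insert a contra-continuous `h` between the indicators `1_U ≤ 1_{cl U}`.
Then `{h > 0}` is closed, contains `U` and lies in `cl U`, so it equals `cl U`. But every
fibre `h⁻¹' {y} = (h⁻¹' {y}ᶜ)ᶜ` of a contra-continuous map into a T₁ space is open, hence so is
every preimage under `h`, in particular `cl U`.
-/

lemma isClosed_indicator_one_preimage_Ioi {s : Set X} (hs : IsClosed s) (t : ℝ) :
    IsClosed (s.indicator 1 ⁻¹' Ioi t) := by
  change IsClosed ((s.indicator fun _ => (1 : ℝ)) ⁻¹' Ioi t)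
  rw [indicator_const_preimage_eq_union]
  simp only [mem_Ioi]
  split_ifs with h1 h0 h0
  · simp
  · simpa
  · exact (h1 (h0.trans zero_lt_one)).elim
  · simp

lemma isClosed_indicator_one_preimage_Iio {s : Set X} (hs : IsOpen s) (t : ℝ) :
    IsClosed (s.indicator 1 ⁻¹' Iio t) := by
  change IsClosed ((s.indicator fun _ => (1 : ℝ)) ⁻¹' Iio t)
  rw [indicator_const_preimage_eq_union]
  simp only [mem_Iio]
  split_ifs with h1 h0 h0
  · simp
  · exact (h0 (zero_lt_one.trans h1)).elim
  · simpa using hs.isClosed_compl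
  · simp

lemma isOpen_preimage_of_forall_isClosed_preimage {Y : Type*} [TopologicalSpace Y] [T1Space Y]
    {h : X → Y} (hh : ∀ U : Set Y, IsOpen U → IsClosed (h ⁻¹' U)) (s : Set Y) :
    IsOpen (h ⁻¹' s) := by
  rw [← biUnion_preimage_singleton]
  refine isOpen_biUnion fun y _ => ?_
  simpa using (hh _ isOpen_compl_singleton).isOpen_compl

lemma subset_preimage_Ioi_of_indicator_le {α : Type*} {s : Set α} {h : α → ℝ}
    (hsh : s.indicator 1 ≤ h) : s ⊆ h ⁻¹' Ioi 0 := fun x hx =>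
  zero_lt_one.trans_le (by simpa [hx] using hsh x)

lemma preimage_Ioi_subset_of_le_indicator {α : Type*} {s : Set α} {h : α → ℝ}
    (hhs : h ≤ s.indicator 1) : h ⁻¹' Ioi 0 ⊆ s := fun x hx => by
  by_contra hxs
  simpa [hxs] using hx.trans_le (hhs x)

theorem extremallyDisconnected_of_insertion_general
    (hins : ∀ f g : X → ℝ,
      (∀ t : ℝ, IsClosed (f ⁻¹' Set.Ioi t)) →
      (∀ t : ℝ, IsClosed (g ⁻¹' Set.Iio t)) →
      g ≤ f →
      ∃ h : X → ℝ, (∀ U : Set ℝ, IsOpen U → IsClosed (h ⁻¹' U)) ∧ g ≤ h ∧ h ≤ f) :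
    ExtremallyDisconnected X := by
  refine ⟨fun U hU => ?_⟩
  obtain ⟨h, hcc, hUh, hhU⟩ := hins ((closure U).indicator 1) (U.indicator 1)
    (isClosed_indicator_one_preimage_Ioi isClosed_closure) (isClosed_indicator_one_preimage_Iio hU)
    (indicator_le_indicator_of_subset subset_closure fun _ => zero_le_one)
  have hclosure : closure U = h ⁻¹' Ioi 0 :=
    (closure_minimal (subset_preimage_Ioi_of_indicator_le hUh) (hcc _ isOpen_Ioi)).antisymm
      (preimage_Ioi_subset_of_le_indicator hhU)
  rw [hclosure]
  exact isOpen_preimage_of_forall_isClosed_preimage hcc _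

theorem extremallyDisconnected_of_insertion
    (hΛ : ∀ A : Set X, A = kernelSet A → IsOpen A)
    (hins : ∀ f g : X → ℝ,
      (∀ t : ℝ, IsClosed (f ⁻¹' Set.Ioi t)) →
      (∀ t : ℝ, IsClosed (g ⁻¹' Set.Iio t)) →
      g ≤ f →
      ∃ h : X → ℝ, (∀ U : Set ℝ, IsOpen U → IsClosed (h ⁻¹' U)) ∧ g ≤ h ∧ h ≤ f) :
    ExtremallyDisconnected X :=
  extremallyDisconnected_of_insertion_general hins
end
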